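/- Let G be a connected graph contractible to the complete bipartite graph K_{m,n} with m ≠ n and m,n ≥ 2, such that at most one bag Z has size at least 2, and Z induces a connected subgraph. Then G does not belong to G^cs. -/
import Mathlib


open SimpleGraph
open scoped Classical

variable {V : Type*} [Fintype V]

noncomputable def setWeight (w : V → ℝ) (A : Set V) : ℝ :=
  ∑ v : V, if v ∈ A then w v else 0

def IsComponentOf (G : SimpleGraph V) (S C : Set V) : Prop :=
  ∃ c : (G.induce S).ConnectedComponent,
    C = Subtype.val '' {x : ↥S | (G.induce S).connectedComponentMk x = c}

def Touches (G : SimpleGraph V) (C D : Set V) : Prop :=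
  ∃ a ∈ C, ∃ b ∈ D, G.Adj a b

def IsSafeSet (G : SimpleGraph V) (w : V → ℝ) (S : Set V) : Prop :=
  S.Nonempty ∧ S ≠ Set.univ ∧
    ∀ C D : Set V, IsComponentOf G S C → IsComponentOf G Sᶜ D → Touches G C D →
      setWeight w D ≤ setWeight w C

def IsConnSafeSet (G : SimpleGraph V) (w : V → ℝ) (S : Set V) : Prop :=
  IsSafeSet G w S ∧ (G.induce S).Connected

noncomputable def safeNumber (G : SimpleGraph V) (w : V → ℝ) : ℝ :=
  sInf (setWeight w '' {S | IsSafeSet G w S})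

noncomputable def connSafeNumber (G : SimpleGraph V) (w : V → ℝ) : ℝ :=
  sInf (setWeight w '' {S | IsConnSafeSet G w S})

def InGcs (G : SimpleGraph V) : Prop :=
  ∀ w : V → ℝ, (∀ v, 0 < w v) → safeNumber G w = connSafeNumber G w

def ContractibleTo {W : Type*} (G : SimpleGraph V) (H : SimpleGraph W) (φ : V → W) : Prop :=
  Function.Surjective φ ∧ ∀ i j : W, i ≠ j →
    ((∃ a b : V, φ a = i ∧ φ b = j ∧ G.Adj a b) ↔ H.Adj i j)


set_option linter.unusedSectionVars false
set_option maxHeartbeats 1000000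

-- ===== weight lemmas =====

lemma setWeight_eq_sum (w : V → ℝ) (A : Set V) :
    setWeight w A = ∑ v ∈ A.toFinset, w v := by
  rw [setWeight, ← Finset.sum_filter]
  congr 1
  ext v
  simp

lemma setWeight_union (w : V → ℝ) {A B : Set V} (h : Disjoint A B) :
    setWeight w (A ∪ B) = setWeight w A + setWeight w B := by
  rw [setWeight_eq_sum, setWeight_eq_sum, setWeight_eq_sum, Set.toFinset_union]
  exact Finset.sum_union (by simpa [Set.disjoint_toFinset] using h)

lemma setWeight_nonneg {w : V → ℝ} (hw : ∀ v, 0 ≤ w v) (A : Set V) :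
    0 ≤ setWeight w A := by
  rw [setWeight_eq_sum]; exact Finset.sum_nonneg fun i _ => hw i

lemma setWeight_mono {w : V → ℝ} (hw : ∀ v, 0 ≤ w v) {A B : Set V} (h : A ⊆ B) :
    setWeight w A ≤ setWeight w B := by
  rw [setWeight_eq_sum, setWeight_eq_sum]
  exact Finset.sum_le_sum_of_subset_of_nonneg (Set.toFinset_subset_toFinset.2 h)
    (fun i _ _ => hw i)

lemma setWeight_pos {w : V → ℝ} (hw : ∀ v, 0 < w v) {A : Set V} (h : A.Nonempty) :
    0 < setWeight w A := by
  rw [setWeight_eq_sum]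
  exact Finset.sum_pos (fun i _ => hw i) (by simpa [Set.toFinset_nonempty] using h)

lemma setWeight_diff {w : V → ℝ} {A B : Set V} (h : B ⊆ A) :
    setWeight w (A \ B) = setWeight w A - setWeight w B := by
  have : A = B ∪ (A \ B) := by rw [Set.union_diff_cancel h]
  have h2 := setWeight_union w (A := B) (B := A \ B) Set.disjoint_sdiff_right
  rw [← this] at h2
  linarith

lemma setWeight_compl (w : V → ℝ) (S : Set V) :
    setWeight w Sᶜ = setWeight w Set.univ - setWeight w S := by
  have := setWeight_diff (w := w) (A := Set.univ) (B := S) (Set.subset_univ S)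
  simpa [Set.compl_eq_univ_diff] using this

lemma setWeight_lt {w : V → ℝ} (hw : ∀ v, 0 < w v) {A B : Set V} (h : A ⊂ B) :
    setWeight w A < setWeight w B := by
  obtain ⟨hsub, hne⟩ := h
  have h1 : (B \ A).Nonempty := Set.nonempty_of_ssubset ⟨hsub, hne⟩
  have := setWeight_diff (w := w) hsub
  have := setWeight_pos hw h1
  linarith

lemma setWeight_ncard {w : V → ℝ} {A : Set V} (h : ∀ v ∈ A, w v = 1) :
    setWeight w A = A.ncard := by
  rw [setWeight_eq_sum, Set.ncard_eq_toFinset_card']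
  rw [Finset.sum_congr rfl (fun v hv => h v (Set.mem_toFinset.1 hv))]
  simp

lemma setWeight_singleton (w : V → ℝ) (x : V) : setWeight w {x} = w x := by
  rw [setWeight_eq_sum]; simp

noncomputable def ww {m n : ℕ} (φ : V → Fin m ⊕ Fin n) : V → ℝ :=
  fun v => ((φ ⁻¹' {φ v}).ncard : ℝ)⁻¹

section Bags
variable {m n : ℕ} {φ : V → Fin m ⊕ Fin n}

lemma bag_ncard_pos (hs : Function.Surjective φ) (h : Fin m ⊕ Fin n) :
    0 < (φ ⁻¹' {h}).ncard := by
  rw [Set.ncard_pos (Set.toFinite _)]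
  obtain ⟨v, hv⟩ := hs h
  exact ⟨v, hv⟩

lemma ww_pos (hs : Function.Surjective φ) (v : V) : 0 < ww φ v := by
  have := bag_ncard_pos hs (φ v)
  rw [ww]
  positivity

lemma ww_eq_one {v : V} (h : (φ ⁻¹' {φ v}).ncard = 1) : ww φ v = 1 := by
  rw [ww, h]; norm_num

lemma weight_preimage (hs : Function.Surjective φ) (I : Set (Fin m ⊕ Fin n)) :
    setWeight (ww φ) (φ ⁻¹' I) = I.ncard := by
  rw [setWeight_eq_sum]
  rw [← Finset.sum_fiberwise_of_maps_to (g := φ) (t := I.toFinset)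
    (fun x hx => by simpa [Set.mem_toFinset] using hx) (ww φ)]
  rw [Set.ncard_eq_toFinset_card']
  have key : ∀ h ∈ I.toFinset,
      ∑ v ∈ (φ ⁻¹' I).toFinset.filter (fun v => φ v = h), ww φ v = 1 := by
    intro h hI
    have hfil : (φ ⁻¹' I).toFinset.filter (fun v => φ v = h) = (φ ⁻¹' {h}).toFinset := by
      ext v
      simp only [Finset.mem_filter, Set.mem_toFinset, Set.mem_preimage, Set.mem_singleton_iff]
      exact ⟨fun ⟨_, e⟩ => e, fun e => ⟨by rw [e]; exact Set.mem_toFinset.1 hI, e⟩⟩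
    rw [hfil]
    have hcard : ((φ ⁻¹' {h}).toFinset.card : ℝ) ≠ 0 := by
      have := bag_ncard_pos hs h
      rw [Set.ncard_eq_toFinset_card'] at this
      exact_mod_cast this.ne'
    calc ∑ v ∈ (φ ⁻¹' {h}).toFinset, ww φ v
        = ∑ v ∈ (φ ⁻¹' {h}).toFinset, ((φ ⁻¹' {h}).ncard : ℝ)⁻¹ := by
          refine Finset.sum_congr rfl fun v hv => ?_
          rw [ww]
          congr 2
          have : φ v = h := by simpa using Set.mem_toFinset.1 hv
          rw [this]
      _ = 1 := by
          rw [Finset.sum_const, Set.ncard_eq_toFinset_card', nsmul_eq_mul]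
          exact mul_inv_cancel₀ hcard
  rw [Finset.sum_congr rfl key]
  simp

def sideSet (m n : ℕ) (b : Bool) : Set (Fin m ⊕ Fin n) := {h | h.isLeft = b}

lemma ncard_sideSet (m n : ℕ) (b : Bool) :
    (sideSet m n b).ncard = bif b then m else n := by
  cases b
  · have : sideSet m n false = Set.range Sum.inr := by
      ext h; cases h <;> simp [sideSet]
    rw [this, ← Set.image_univ, Set.ncard_image_of_injective _ Sum.inr_injective,
      Set.ncard_univ]
    simp
  · have : sideSet m n true = Set.range Sum.inl := by
      ext h; cases h <;> simp [sideSet]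
    rw [this, ← Set.image_univ, Set.ncard_image_of_injective _ Sum.inl_injective,
      Set.ncard_univ]
    simp

lemma cbAdj (h h' : Fin m ⊕ Fin n) :
    (completeBipartiteGraph (Fin m) (Fin n)).Adj h h' ↔ h.isLeft ≠ h'.isLeft := by
  cases h <;> cases h' <;> simp

lemma ncard_univ_sum : (Set.univ : Set (Fin m ⊕ Fin n)).ncard = m + n := by
  rw [Set.ncard_univ]
  simp [Nat.card_eq_fintype_card]

end Bags

section Contract
variable {m n : ℕ} {G : SimpleGraph V} {φ : V → Fin m ⊕ Fin n}
  (hc : ContractibleTo G (completeBipartiteGraph (Fin m) (Fin n)) φ)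

lemma adj_side (hc : ContractibleTo G (completeBipartiteGraph (Fin m) (Fin n)) φ)
    {a b : V} (hab : G.Adj a b) : φ a = φ b ∨ (φ a).isLeft ≠ (φ b).isLeft := by
  by_cases h : φ a = φ b
  · exact Or.inl h
  · exact Or.inr ((cbAdj _ _).1 ((hc.2 _ _ h).1 ⟨a, b, rfl, rfl, hab⟩))

lemma sing_eq {v x : V} (h1 : (φ ⁻¹' {φ v}).ncard = 1) (hx : φ x = φ v) : x = v := by
  obtain ⟨c, hcs⟩ := Set.ncard_eq_one.1 h1
  have hxc : x ∈ φ ⁻¹' {φ v} := hx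
  have hvc : v ∈ φ ⁻¹' {φ v} := rfl
  rw [hcs] at hxc hvc
  rw [hxc, hvc]

lemma adj_of_sing_sing (hc : ContractibleTo G (completeBipartiteGraph (Fin m) (Fin n)) φ)
    {u v : V} (h1 : (φ ⁻¹' {φ u}).ncard = 1) (h2 : (φ ⁻¹' {φ v}).ncard = 1)
    (hside : (φ u).isLeft ≠ (φ v).isLeft) : G.Adj u v := by
  have hne : φ u ≠ φ v := fun e => hside (by rw [e])
  obtain ⟨a, b, ha, hb, hab⟩ := (hc.2 _ _ hne).2 ((cbAdj _ _).2 hside)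
  rwa [sing_eq h1 ha, sing_eq h2 hb] at hab

lemma exists_adj_bag_sing (hc : ContractibleTo G (completeBipartiteGraph (Fin m) (Fin n)) φ)
    {v : V} (h2 : (φ ⁻¹' {φ v}).ncard = 1) (h : Fin m ⊕ Fin n)
    (hside : h.isLeft ≠ (φ v).isLeft) : ∃ z, φ z = h ∧ G.Adj z v := by
  have hne : h ≠ φ v := fun e => hside (by rw [e])
  obtain ⟨a, b, ha, hb, hab⟩ := (hc.2 _ _ hne).2 ((cbAdj _ _).2 hside)
  exact ⟨a, ha, by rwa [sing_eq h2 hb] at hab⟩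

end Contract

section Reach
variable {G : SimpleGraph V}

lemma reach_of_adj {S : Set V} {x y : V} (hx : x ∈ S) (hy : y ∈ S) (h : G.Adj x y) :
    (G.induce S).Reachable ⟨x, hx⟩ ⟨y, hy⟩ :=
  SimpleGraph.Adj.reachable (by simpa using h)

lemma reach_mono {S S' : Set V} (hss : S' ⊆ S) {x y : V} (hx : x ∈ S') (hy : y ∈ S')
    (h : (G.induce S').Reachable ⟨x, hx⟩ ⟨y, hy⟩) :
    (G.induce S).Reachable ⟨x, hss hx⟩ ⟨y, hss hy⟩ :=
  h.map (G.induceHomOfLE hss).toHom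

lemma reach_in_connected {A S : Set V} (hA : (G.induce A).Connected) (hAS : A ⊆ S)
    {x y : V} (hx : x ∈ A) (hy : y ∈ A) :
    (G.induce S).Reachable ⟨x, hAS hx⟩ ⟨y, hAS hy⟩ :=
  reach_mono hAS hx hy (hA.preconnected ⟨x, hx⟩ ⟨y, hy⟩)

lemma phi_const_of_reach {W : Type*} {φ : V → W} {S : Set V}
    (hS : ∀ a ∈ S, ∀ b ∈ S, G.Adj a b → φ a = φ b)
    {x y : ↥S} (h : (G.induce S).Reachable x y) : φ x.1 = φ y.1 := by
  obtain ⟨p⟩ := h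
  induction p with
  | nil => rfl
  | @cons u v w h p ih =>
    exact (hS u.1 u.2 v.1 v.2 (by simpa using h)).trans ih

lemma exists_boundary {S : Set V} {x y : V} (p : G.Walk x y) (hx : x ∉ S) (hy : y ∈ S) :
    ∃ a b, ∃ (ha : a ∉ S), b ∈ S ∧ G.Adj a b ∧
      (G.induce Sᶜ).Reachable ⟨x, hx⟩ ⟨a, ha⟩ := by
  induction p with
  | nil => exact absurd hy hx
  | @cons u v w h p ih =>
    by_cases hv : v ∈ S
    · exact ⟨u, v, hx, hv, h, Reachable.refl _⟩
    · obtain ⟨a, b, ha, hb, hab, hr⟩ := ih hv hy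
      exact ⟨a, b, ha, hb, hab, (reach_of_adj (S := Sᶜ) (x := u) (y := v) hx hv h).trans hr⟩

lemma induce_singleton_connected (a : V) : (G.induce ({a} : Set V)).Connected := by
  rw [SimpleGraph.connected_iff]
  refine ⟨fun x y => ?_, ⟨⟨a, rfl⟩⟩⟩
  have : x = y := Subtype.ext (by rw [x.2, y.2])
  rw [this]

end Reach

section Comp
variable (G : SimpleGraph V)

def compSet (S : Set V) (x : V) : Set V :=
  {y | ∃ (hy : y ∈ S) (hx : x ∈ S), (G.induce S).Reachable ⟨y, hy⟩ ⟨x, hx⟩}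

variable {G}

lemma compSet_subset {S : Set V} {x : V} : compSet G S x ⊆ S := fun _ hy => hy.1

lemma isComponentOf_compSet {S : Set V} {x : V} (hx : x ∈ S) :
    IsComponentOf G S (compSet G S x) := by
  refine ⟨(G.induce S).connectedComponentMk ⟨x, hx⟩, ?_⟩
  ext y
  simp only [Set.mem_image, Set.mem_setOf_eq, compSet]
  constructor
  · rintro ⟨hy, hx', hr⟩
    exact ⟨⟨y, hy⟩, ConnectedComponent.eq.2 hr, rfl⟩
  · rintro ⟨⟨y', hy'⟩, hcc, rfl⟩
    exact ⟨hy', hx, ConnectedComponent.eq.1 hcc⟩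

lemma isComponentOf_elim {S C : Set V} (h : IsComponentOf G S C) :
    ∃ x, ∃ (_ : x ∈ S), C = compSet G S x := by
  obtain ⟨c, rfl⟩ := h
  obtain ⟨⟨x, hx⟩, rfl⟩ := c.exists_rep
  refine ⟨x, hx, ?_⟩
  ext y
  simp only [Set.mem_image, Set.mem_setOf_eq, compSet]
  constructor
  · rintro ⟨⟨y', hy'⟩, hcc, rfl⟩
    exact ⟨hy', hx, ConnectedComponent.eq.1 hcc⟩
  · rintro ⟨hy, hx', hr⟩
    exact ⟨⟨y, hy⟩, ConnectedComponent.eq.2 hr, rfl⟩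

lemma compSet_eq_of_connected {S : Set V} (hconn : (G.induce S).Connected) {x : V}
    (hx : x ∈ S) : compSet G S x = S := by
  ext y
  constructor
  · exact fun hy => hy.1
  · intro hy
    exact ⟨hy, hx, hconn.preconnected ⟨y, hy⟩ ⟨x, hx⟩⟩

lemma isComponentOf_self {S : Set V} (hconn : (G.induce S).Connected) :
    IsComponentOf G S S := by
  obtain ⟨⟨x, hx⟩⟩ := hconn.nonempty
  have := isComponentOf_compSet (G := G) hx
  rwa [compSet_eq_of_connected hconn hx] at this


section Main2
variable {m n : ℕ} {G : SimpleGraph V} {φ : V → Fin m ⊕ Fin n}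

lemma safe_comp_le {w : V → ℝ} {S : Set V} (hG : G.Connected)
    (hS : IsConnSafeSet G w S) {x : V} (hx : x ∉ S) :
    setWeight w (compSet G Sᶜ x) ≤ setWeight w S := by
  obtain ⟨⟨hne, hnu, hsafe⟩, hconn⟩ := hS
  obtain ⟨y, hy⟩ := hne
  obtain ⟨p⟩ := hG.preconnected x y
  obtain ⟨a, b, ha, hb, hab, hr⟩ := exists_boundary p hx hy
  have haD : a ∈ compSet G Sᶜ x := ⟨ha, hx, hr.symm⟩
  exact hsafe S (compSet G Sᶜ x) (isComponentOf_self hconn)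
    (isComponentOf_compSet (S := Sᶜ) hx) ⟨b, hb, a, haD, hab.symm⟩

lemma bag_connected (hs : Function.Surjective φ)
    (hZconn : ∀ h : Fin m ⊕ Fin n, 2 ≤ (φ ⁻¹' {h}).ncard → (G.induce (φ ⁻¹' {h})).Connected)
    (h : Fin m ⊕ Fin n) : (G.induce (φ ⁻¹' {h})).Connected := by
  have hpos := bag_ncard_pos hs h
  rcases Nat.lt_or_ge (φ ⁻¹' {h}).ncard 2 with h2 | h2
  · have h1 : (φ ⁻¹' {h}).ncard = 1 := by omega
    obtain ⟨a, ha⟩ := Set.ncard_eq_one.1 h1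
    rw [ha]
    exact induce_singleton_connected a
  · exact hZconn h h2

lemma comp_of_homog (hc : ContractibleTo G (completeBipartiteGraph (Fin m) (Fin n)) φ)
    (hZconn : ∀ h : Fin m ⊕ Fin n, 2 ≤ (φ ⁻¹' {h}).ncard → (G.induce (φ ⁻¹' {h})).Connected)
    {I : Set (Fin m ⊕ Fin n)} (b : Bool)
    (hhom : ∀ h ∈ I, h.isLeft = b) {C : Set V}
    (hcomp : IsComponentOf G (φ ⁻¹' I) C) : ∃ h ∈ I, C = φ ⁻¹' {h} := by
  obtain ⟨x, hx, rfl⟩ := isComponentOf_elim hcomp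
  refine ⟨φ x, hx, ?_⟩
  have hnoadj : ∀ a ∈ φ ⁻¹' I, ∀ b' ∈ φ ⁻¹' I, G.Adj a b' → φ a = φ b' := by
    intro a ha b' hb' hab
    rcases adj_side hc hab with h | h
    · exact h
    · exact absurd (by rw [hhom _ ha, hhom _ hb']) h
  have hsub : φ ⁻¹' {φ x} ⊆ φ ⁻¹' I := by
    intro v hv
    have : φ v = φ x := hv
    simpa [Set.mem_preimage, this] using hx
  ext y
  constructor
  · rintro ⟨hy, hx', hr⟩
    exact phi_const_of_reach hnoadj hr
  · intro hy
    exact ⟨hsub hy, hx,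
      reach_in_connected (bag_connected hc.1 hZconn (φ x)) hsub hy rfl⟩

lemma compl_sideSet (b : Bool) : (sideSet m n b)ᶜ = sideSet m n (!b) := by
  ext h
  simp only [Set.mem_compl_iff, sideSet, Set.mem_setOf_eq]
  cases hb : h.isLeft <;> cases b <;> simp

lemma safe_side (hm : 0 < m) (hn : 0 < n)
    (hc : ContractibleTo G (completeBipartiteGraph (Fin m) (Fin n)) φ)
    (hZconn : ∀ h : Fin m ⊕ Fin n, 2 ≤ (φ ⁻¹' {h}).ncard → (G.induce (φ ⁻¹' {h})).Connected)
    (b : Bool) : IsSafeSet G (ww φ) (φ ⁻¹' (sideSet m n b)) := by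
  have hs := hc.1
  have hidx : ∀ b' : Bool, ∃ h : Fin m ⊕ Fin n, h.isLeft = b' := by
    intro b'
    cases b'
    · exact ⟨Sum.inr ⟨0, hn⟩, rfl⟩
    · exact ⟨Sum.inl ⟨0, hm⟩, rfl⟩
  refine ⟨?_, ?_, ?_⟩
  · obtain ⟨h, hb⟩ := hidx b
    obtain ⟨v, hv⟩ := hs h
    exact ⟨v, by simp only [Set.mem_preimage, hv, sideSet, Set.mem_setOf_eq, hb]⟩
  · intro hun
    obtain ⟨h, hb⟩ := hidx (!b)
    obtain ⟨v, hv⟩ := hs h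
    have h1 : v ∈ φ ⁻¹' (sideSet m n b) := hun ▸ Set.mem_univ v
    have h2 : (φ v).isLeft = b := h1
    rw [hv, hb] at h2
    cases b <;> simp at h2
  · intro C D hC hD _
    have hcpl : (φ ⁻¹' (sideSet m n b))ᶜ = φ ⁻¹' (sideSet m n (!b)) := by
      rw [← Set.preimage_compl, compl_sideSet]
    obtain ⟨h1, _, rfl⟩ := comp_of_homog hc hZconn b (fun _ hh => hh) hC
    rw [hcpl] at hD
    obtain ⟨h2, _, rfl⟩ := comp_of_homog hc hZconn (!b) (fun _ hh => hh) hD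
    rw [weight_preimage hs, weight_preimage hs, Set.ncard_singleton, Set.ncard_singleton]

end Main2

section Big
variable {m n : ℕ} {G : SimpleGraph V} {φ : V → Fin m ⊕ Fin n}

lemma mem_pre_side {v : V} {b : Bool} :
    v ∈ φ ⁻¹' (sideSet m n b) ↔ (φ v).isLeft = b := Iff.rfl

lemma case2 (hG : G.Connected) (hmn : m ≠ n) (hm : 2 ≤ m) (hn : 2 ≤ n)
    (hc : ContractibleTo G (completeBipartiteGraph (Fin m) (Fin n)) φ)
    (hZ : ∀ h h' : Fin m ⊕ Fin n, 2 ≤ (φ ⁻¹' {h}).ncard → 2 ≤ (φ ⁻¹' {h'}).ncard → h = h')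
    (hZconn : ∀ h : Fin m ⊕ Fin n, 2 ≤ (φ ⁻¹' {h}).ncard → (G.induce (φ ⁻¹' {h})).Connected)
    {S : Set V} (hS : IsConnSafeSet G (ww φ) S) (b : Bool)
    (hnoT : ∀ v, v ∉ S → (φ ⁻¹' {φ v}).ncard = 1 → (φ v).isLeft ≠ b)
    (hle : setWeight (ww φ) S ≤ (min m n : ℝ)) : False := by
  have hs := hc.1
  set w := ww φ with hwdef
  have hwpos : ∀ v, 0 < w v := ww_pos hs
  have hwnn : ∀ v, 0 ≤ w v := fun v => (hwpos v).le
  set p : ℕ := bif b then m else n with hp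
  set q : ℕ := bif b then n else m with hq
  have hps : (sideSet m n b).ncard = p := ncard_sideSet m n b
  have hqs : (sideSet m n (!b)).ncard = q := by
    rw [ncard_sideSet]; cases b <;> simp [hp, hq]
  have hp2 : 2 ≤ p := by cases b <;> simp [hp] <;> omega
  have hq2 : 2 ≤ q := by cases b <;> simp [hq] <;> omega
  have hpqne : p ≠ q := by cases b <;> simp [hp, hq] <;> omega
  have hminp : min m n ≤ p := by cases b <;> simp [hp] <;> omega
  have hminpq : min m n = min p q := by cases b <;> simp [hp, hq, Nat.min_comm]
  have hminp' : (m : ℝ) ⊓ (n : ℝ) ≤ (p : ℝ) := by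
    rw [← Nat.cast_min]; exact_mod_cast hminp
  by_cases hPb : ∀ v : V, (φ v).isLeft = b → v ∈ S
  · -- S contains the whole side b
    have h1 : φ ⁻¹' (sideSet m n b) ⊆ S := fun v hv => hPb v hv
    have hwPb : setWeight w (φ ⁻¹' (sideSet m n b)) = (p : ℝ) := by
      rw [weight_preimage hs, hps]
    have hple : (p : ℝ) ≤ setWeight w S := hwPb ▸ setWeight_mono hwnn h1
    have hSeq : S = φ ⁻¹' (sideSet m n b) := by
      by_contra hne
      have := setWeight_lt hwpos (h1.ssubset_of_ne (fun e => hne e.symm))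
      linarith
    have h2c : 1 < (sideSet m n b).ncard := by rw [hps]; omega
    rw [Set.one_lt_ncard (Set.toFinite _)] at h2c
    obtain ⟨h₁, hh₁, h₂, hh₂, hne12⟩ := h2c
    obtain ⟨x₁, hx₁⟩ := hs h₁
    obtain ⟨x₂, hx₂⟩ := hs h₂
    have hx₁S : x₁ ∈ S := by rw [hSeq, mem_pre_side, hx₁]; exact hh₁
    have hx₂S : x₂ ∈ S := by rw [hSeq, mem_pre_side, hx₂]; exact hh₂
    have hhom : ∀ a ∈ S, ∀ b' ∈ S, G.Adj a b' → φ a = φ b' := by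
      intro a ha b' hb' hab
      rcases adj_side hc hab with h | h
      · exact h
      · have ha' : (φ a).isLeft = b := by rw [hSeq] at ha; exact ha
        have hb'' : (φ b').isLeft = b := by rw [hSeq] at hb'; exact hb'
        exact absurd (ha'.trans hb''.symm) h
    have := phi_const_of_reach hhom (hS.2.preconnected ⟨x₁, hx₁S⟩ ⟨x₂, hx₂S⟩)
    rw [hx₁, hx₂] at this
    exact hne12 this
  · push_neg at hPb
    obtain ⟨v₀, hbv₀, hv₀S⟩ := hPb
    have hv₀ns : 2 ≤ (φ ⁻¹' {φ v₀}).ncard := by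
      by_contra h2
      have h1 : (φ ⁻¹' {φ v₀}).ncard = 1 := by
        have := bag_ncard_pos hs (φ v₀); omega
      exact hnoT v₀ hv₀S h1 hbv₀
    have hsing : ∀ v, φ v ≠ φ v₀ → (φ ⁻¹' {φ v}).ncard = 1 := by
      intro v hvz
      by_contra h2
      have h2' : 2 ≤ (φ ⁻¹' {φ v}).ncard := by
        have := bag_ncard_pos hs (φ v); omega
      exact hvz (hZ _ _ h2' hv₀ns)
    have hSb' : ∀ v, (φ v).isLeft = b → φ v ≠ φ v₀ → v ∈ S := by
      intro v hb hvz
      by_contra hvS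
      exact hnoT v hvS (hsing v hvz) hb
    set z := φ v₀ with hz
    have hbz : z.isLeft = b := hbv₀
    set Sb : Set V := φ ⁻¹' (sideSet m n b \ {z}) with hSbdef
    have hSbw : setWeight w Sb = (p : ℝ) - 1 := by
      rw [weight_preimage hs, Set.ncard_diff_singleton_of_mem (show z ∈ sideSet m n b from hbz), hps, Nat.cast_sub (by omega)]
      norm_num
    have hSbS : Sb ⊆ S := fun v hv => hSb' v hv.1 hv.2
    set Q : Set V := φ ⁻¹' (sideSet m n (!b)) with hQdef
    have hQw : setWeight w Q = (q : ℝ) := by rw [weight_preimage hs, hqs]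
    have hQside : ∀ v ∈ Q, (φ v).isLeft ≠ b := by
      intro v hv e
      have h8 : (φ v).isLeft = !b := hv
      rw [e] at h8
      simp at h8
    have hQsing : ∀ v ∈ Q, (φ ⁻¹' {φ v}).ncard = 1 := by
      intro v hv
      refine hsing v fun e => hQside v hv ?_
      rw [e]; exact hbz
    have hQdisjSb : Disjoint Sb Q := by
      rw [Set.disjoint_left]
      intro v h1 h2
      exact hQside v h2 h1.1
    have hSQw : setWeight w (S ∩ Q) = ((S ∩ Q).ncard : ℝ) :=
      setWeight_ncard (fun v hv => ww_eq_one (hQsing v hv.2))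
    set k := (S ∩ Q).ncard with hk
    have hSlow : (p : ℝ) - 1 + (k : ℝ) ≤ setWeight w S := by
      have hsub : Sb ∪ (S ∩ Q) ⊆ S := Set.union_subset hSbS Set.inter_subset_left
      have hdis : Disjoint Sb (S ∩ Q) := hQdisjSb.mono_right Set.inter_subset_right
      have := setWeight_mono hwnn hsub
      rwa [setWeight_union w hdis, hSbw, hSQw] at this
    by_cases hk2 : 2 ≤ k
    · have hk2' : (2 : ℝ) ≤ (k : ℝ) := by exact_mod_cast hk2
      linarith
    by_cases hk0 : k = 0
    · -- S entirely on side b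
      have hSQ : S ∩ Q = ∅ := (Set.ncard_eq_zero (Set.toFinite _)).1 hk0
      have hSside : ∀ v ∈ S, (φ v).isLeft = b := by
        intro v hv
        by_contra hvb
        have hvQ : v ∈ Q := by
          show (φ v).isLeft = !b
          cases hb2 : (φ v).isLeft <;> cases b <;> simp_all
        exact (Set.eq_empty_iff_forall_notMem.1 hSQ v) ⟨hv, hvQ⟩
      have hhom : ∀ a ∈ S, ∀ b' ∈ S, G.Adj a b' → φ a = φ b' := by
        intro a ha b' hb' hab
        rcases adj_side hc hab with h | h
        · exact h
        · exact absurd ((hSside a ha).trans (hSside b' hb').symm) h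
      have hdne : 0 < (sideSet m n b \ {z}).ncard := by
        rw [Set.ncard_diff_singleton_of_mem (show z ∈ sideSet m n b from hbz), hps]; omega
      obtain ⟨h₁, hh₁⟩ := (Set.ncard_pos (Set.toFinite _)).1 hdne
      obtain ⟨x₁, hx₁⟩ := hs h₁
      have hx₁Sb : x₁ ∈ Sb := by
        show φ x₁ ∈ sideSet m n b \ {z}
        rw [hx₁]; exact hh₁
      have hx₁S := hSbS hx₁Sb
      have hx₁sing : (φ ⁻¹' {φ x₁}).ncard = 1 := by
        refine hsing x₁ fun e => ?_
        rw [hx₁] at e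
        exact hh₁.2 e
      have hconst : ∀ v ∈ S, φ v = h₁ := by
        intro v hv
        have := phi_const_of_reach hhom (hS.2.preconnected ⟨v, hv⟩ ⟨x₁, hx₁S⟩)
        rwa [hx₁] at this
      by_cases hp3 : 3 ≤ p
      · have h2c : 1 < (sideSet m n b \ {z}).ncard := by
          rw [Set.ncard_diff_singleton_of_mem (show z ∈ sideSet m n b from hbz), hps]; omega
        rw [Set.one_lt_ncard (Set.toFinite _)] at h2c
        obtain ⟨g₁, hg₁, g₂, hg₂, hgne⟩ := h2c
        obtain ⟨y₁, hy₁⟩ := hs g₁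
        obtain ⟨y₂, hy₂⟩ := hs g₂
        have hy₁S : y₁ ∈ S := hSbS (by show φ y₁ ∈ sideSet m n b \ {z}; rw [hy₁]; exact hg₁)
        have hy₂S : y₂ ∈ S := hSbS (by show φ y₂ ∈ sideSet m n b \ {z}; rw [hy₂]; exact hg₂)
        have e1 := hconst y₁ hy₁S
        have e2 := hconst y₂ hy₂S
        rw [hy₁] at e1; rw [hy₂] at e2
        exact hgne (e1.trans e2.symm)
      · have hp2' : p = 2 := by omega
        have hSx : S = {x₁} := by
          refine Set.eq_singleton_iff_unique_mem.2 ⟨hx₁S, ?_⟩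
          intro v hv
          exact sing_eq hx₁sing ((hconst v hv).trans hx₁.symm)
        have hwS1 : setWeight w S = 1 := by
          rw [hSx, setWeight_singleton]
          exact ww_eq_one hx₁sing
        have hbagT : φ ⁻¹' {z} ⊆ Sᶜ := by
          intro v hv
          simp only [Set.mem_compl_iff]
          intro hvS
          have h3 := hconst v hvS
          have hvz : φ v = z := hv
          exact hh₁.2 (by rw [← h3, hvz]; rfl)
        have hv₀T : v₀ ∈ Sᶜ := hbagT rfl
        have hv₀T' : v₀ ∉ S := hv₀T
        set D := compSet G Sᶜ v₀ with hDdef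
        have hbagD : φ ⁻¹' {z} ⊆ D := by
          intro y hy
          exact ⟨hbagT hy, hv₀T, reach_in_connected (hZconn z hv₀ns) hbagT hy rfl⟩
        have hQT : Q ⊆ Sᶜ := fun v hv hvS =>
          (Set.eq_empty_iff_forall_notMem.1 hSQ v) ⟨hvS, hv⟩
        have hQD : Q ⊆ D := by
          intro v hv
          have hsidezv : z.isLeft ≠ (φ v).isLeft := by
            intro e
            exact hQside v hv (e.symm.trans hbz)
          obtain ⟨z', hz', hadj⟩ := exists_adj_bag_sing hc (hQsing v hv) z hsidezv
          have hz'T : z' ∈ Sᶜ := hbagT hz'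
          exact ⟨hQT hv, hv₀T,
            (reach_of_adj (S := Sᶜ) (hQT hv) hz'T hadj.symm).trans
              (reach_in_connected (hZconn z hv₀ns) hbagT hz' rfl)⟩
        have hdisjzQ : Disjoint (φ ⁻¹' {z}) Q := by
          rw [Set.disjoint_left]
          intro v h1 h2
          exact hQside v h2 (by rw [show φ v = z from h1]; exact hbz)
        have hDge : 1 + (q : ℝ) ≤ setWeight w D := by
          have hsub : φ ⁻¹' {z} ∪ Q ⊆ D := Set.union_subset hbagD hQD
          have h4 := setWeight_mono hwnn hsub
          rw [setWeight_union w hdisjzQ, weight_preimage hs, Set.ncard_singleton, hQw] at h4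
          simpa using h4
        have hDle := safe_comp_le hG hS hv₀T'
        rw [hwS1] at hDle
        have hq0 : (0 : ℝ) < (q : ℝ) := by exact_mod_cast Nat.lt_of_lt_of_le Nat.zero_lt_two hq2
        linarith
    · have hk1 : k = 1 := by omega
      obtain ⟨r, hr⟩ := Set.ncard_eq_one.1 (hk ▸ hk1 : (S ∩ Q).ncard = 1)
      have hrSQ : r ∈ S ∩ Q := by rw [hr]; rfl
      by_cases hSNS : (S ∩ φ ⁻¹' {z}).Nonempty
      · have hdisj1 : Disjoint (Sb ∪ S ∩ Q) (S ∩ φ ⁻¹' {z}) := by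
          rw [Set.disjoint_left]
          rintro v (h1 | h1) h2
          · exact h1.2 h2.2
          · exact hQside v h1.2 (by rw [show φ v = z from h2.2]; exact hbz)
        have hsub : (Sb ∪ S ∩ Q) ∪ S ∩ φ ⁻¹' {z} ⊆ S :=
          Set.union_subset (Set.union_subset hSbS Set.inter_subset_left) Set.inter_subset_left
        have h5 := setWeight_mono hwnn hsub
        rw [setWeight_union w hdisj1,
          setWeight_union w (hQdisjSb.mono_right Set.inter_subset_right), hSbw, hSQw] at h5
        have hpos3 : 0 < setWeight w (S ∩ φ ⁻¹' {z}) := setWeight_pos hwpos hSNS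
        have hk1' : ((S ∩ Q).ncard : ℝ) = 1 := by rw [← hk, hk1]; norm_num
        rw [hk1'] at h5
        linarith
      · have hbagT : φ ⁻¹' {z} ⊆ Sᶜ := by
          intro v hv
          simp only [Set.mem_compl_iff]
          exact fun hvS => hSNS ⟨v, hvS, hv⟩
        have hv₀T : v₀ ∈ Sᶜ := hbagT rfl
        have hv₀T' : v₀ ∉ S := hv₀T
        have hwge : (p : ℝ) ≤ setWeight w S := by
          have : ((k : ℕ) : ℝ) = 1 := by rw [hk1]; norm_num
          linarith [hSlow, this]
        have hqp : q < p → False := by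
          intro hqp
          have h7 : min p q = q := by omega
          have h6 : (m : ℝ) ⊓ (n : ℝ) = (q : ℝ) := by
            rw [← Nat.cast_min, hminpq, h7]
          have hq' : (q : ℝ) < (p : ℝ) := by exact_mod_cast hqp
          linarith
        have hpltq : p < q := by
          rcases Nat.lt_trichotomy p q with h | h | h
          · exact h
          · exact absurd h hpqne
          · exact absurd h hqp
        set D := compSet G Sᶜ v₀ with hDdef
        have hbagD : φ ⁻¹' {z} ⊆ D := by
          intro y hy
          exact ⟨hbagT hy, hv₀T, reach_in_connected (hZconn z hv₀ns) hbagT hy rfl⟩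
        have hQT' : Q \ {r} ⊆ Sᶜ := by
          intro v hv
          simp only [Set.mem_compl_iff]
          intro hvS
          have : v ∈ S ∩ Q := ⟨hvS, hv.1⟩
          rw [hr] at this
          exact hv.2 this
        have hQD : Q \ {r} ⊆ D := by
          intro v hv
          have hsidezv : z.isLeft ≠ (φ v).isLeft := by
            intro e
            exact hQside v hv.1 (e.symm.trans hbz)
          obtain ⟨z', hz', hadj⟩ := exists_adj_bag_sing hc (hQsing v hv.1) z hsidezv
          have hz'T : z' ∈ Sᶜ := hbagT hz'
          exact ⟨hQT' hv, hv₀T,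
            (reach_of_adj (S := Sᶜ) (hQT' hv) hz'T hadj.symm).trans
              (reach_in_connected (hZconn z hv₀ns) hbagT hz' rfl)⟩
        have hrQ : r ∈ Q := hrSQ.2
        have hQrw : setWeight w (Q \ {r}) = (q : ℝ) - 1 := by
          rw [setWeight_diff (Set.singleton_subset_iff.2 hrQ), hQw, setWeight_singleton,
            show w r = 1 from ww_eq_one (hQsing r hrQ)]
        have hdisjzQ : Disjoint (φ ⁻¹' {z}) (Q \ {r}) := by
          rw [Set.disjoint_left]
          intro v h1 h2
          exact hQside v h2.1 (by rw [show φ v = z from h1]; exact hbz)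
        have hDge : 1 + ((q : ℝ) - 1) ≤ setWeight w D := by
          have hsub : φ ⁻¹' {z} ∪ (Q \ {r}) ⊆ D := Set.union_subset hbagD hQD
          have h4 := setWeight_mono hwnn hsub
          rw [setWeight_union w hdisjzQ, weight_preimage hs, Set.ncard_singleton, hQrw] at h4
          simpa using h4
        have hDle := safe_comp_le hG hS hv₀T'
        have hpq' : (p : ℝ) < (q : ℝ) := by exact_mod_cast hpltq
        linarith

lemma connSafe_big {m n : ℕ} {G : SimpleGraph V} {φ : V → Fin m ⊕ Fin n}
    (hG : G.Connected) (hmn : m ≠ n) (hm : 2 ≤ m) (hn : 2 ≤ n)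
    (hc : ContractibleTo G (completeBipartiteGraph (Fin m) (Fin n)) φ)
    (hZ : ∀ h h' : Fin m ⊕ Fin n, 2 ≤ (φ ⁻¹' {h}).ncard → 2 ≤ (φ ⁻¹' {h'}).ncard → h = h')
    (hZconn : ∀ h : Fin m ⊕ Fin n, 2 ≤ (φ ⁻¹' {h}).ncard → (G.induce (φ ⁻¹' {h})).Connected)
    {S : Set V} (hS : IsConnSafeSet G (ww φ) S) :
    (min m n : ℝ) < setWeight (ww φ) S := by
  by_contra hlt
  push_neg at hlt
  have hs := hc.1
  set w := ww φ with hwdef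
  have hwpos : ∀ v, 0 < w v := ww_pos hs
  have hwnn : ∀ v, 0 ≤ w v := fun v => (hwpos v).le
  have hnat : 2 * min m n + 1 ≤ m + n := by
    rcases le_total m n with h | h
    · rw [min_eq_left h]; omega
    · rw [min_eq_right h]; omega
  have hc1 : 2 * ((m : ℝ) ⊓ (n : ℝ)) + 1 ≤ (m : ℝ) + n := by
    rw [← Nat.cast_min]
    exact_mod_cast hnat
  by_cases hL : ∃ u, u ∉ S ∧ (φ ⁻¹' {φ u}).ncard = 1 ∧ (φ u).isLeft = true
  · by_cases hR : ∃ r, r ∉ S ∧ (φ ⁻¹' {φ r}).ncard = 1 ∧ (φ r).isLeft = false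
    · -- Case 1 : both sides have singleton vertices outside S
      obtain ⟨u, huS, husing, hulft⟩ := hL
      obtain ⟨r, hrS, hrsing, hrlft⟩ := hR
      have hur : G.Adj u r :=
        adj_of_sing_sing hc husing hrsing (by rw [hulft, hrlft]; simp)
      have huT : u ∈ Sᶜ := huS
      have hrT : r ∈ Sᶜ := hrS
      set D := compSet G Sᶜ u with hD
      have hDle := safe_comp_le hG hS huS
      have hTsing : ∀ v, v ∉ S → (φ ⁻¹' {φ v}).ncard = 1 → v ∈ D := by
        intro v hv hvsing
        have hvT : v ∈ Sᶜ := hv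
        cases hb : (φ v).isLeft
        · have hadj : G.Adj v u :=
            adj_of_sing_sing hc hvsing husing (by rw [hb, hulft]; simp)
          exact ⟨hvT, huT, reach_of_adj (S := Sᶜ) hvT huT hadj⟩
        · have h1 : G.Adj v r :=
            adj_of_sing_sing hc hvsing hrsing (by rw [hb, hrlft]; simp)
          exact ⟨hvT, huT, (reach_of_adj (S := Sᶜ) hvT hrT h1).trans
            (reach_of_adj (S := Sᶜ) hrT huT hur.symm)⟩
      have hwuniv : setWeight w Set.univ = (m : ℝ) + n := by
        have huv : (Set.univ : Set V) = φ ⁻¹' Set.univ := by simp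
        rw [huv, weight_preimage hs, ncard_univ_sum]
        push_cast
        ring
      have hwT : setWeight w Sᶜ = (m : ℝ) + n - setWeight w S := by
        rw [setWeight_compl, hwuniv]
      set NS : Set V := {v : V | 2 ≤ (φ ⁻¹' {φ v}).ncard} with hNS
      have hTdiff : Sᶜ \ NS ⊆ D := by
        intro v hv
        refine hTsing v hv.1 ?_
        have h0 := bag_ncard_pos hs (φ v)
        have h2 : ¬ 2 ≤ (φ ⁻¹' {φ v}).ncard := hv.2
        omega
      have hfull : Sᶜ ⊆ D → False := by
        intro hsub
        have h3 : setWeight w Sᶜ ≤ setWeight w D := setWeight_mono hwnn hsub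
        linarith
      by_cases hNSe : NS = ∅
      · refine hfull fun v hv => hTdiff ⟨hv, ?_⟩
        rw [hNSe]
        exact Set.notMem_empty v
      · obtain ⟨v₀, hv₀⟩ := Set.nonempty_iff_ne_empty.2 hNSe
        have hv₀ns : 2 ≤ (φ ⁻¹' {φ v₀}).ncard := hv₀
        set z := φ v₀ with hz
        have hNSbag : NS = φ ⁻¹' {z} := by
          ext v
          constructor
          · intro hv
            exact (hZ _ _ hv hv₀ns : φ v = z)
          · intro hv
            show 2 ≤ (φ ⁻¹' {φ v}).ncard
            rw [show φ v = z from hv]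
            exact hv₀ns
        by_cases hNSsub : NS ⊆ Sᶜ
        · have hbagT : φ ⁻¹' {z} ⊆ Sᶜ := hNSbag ▸ hNSsub
          have hbagD : φ ⁻¹' {z} ⊆ D := by
            have hattach : ∃ t, t ∈ D ∧ t ∈ Sᶜ ∧ (φ ⁻¹' {φ t}).ncard = 1 ∧
                (φ t).isLeft ≠ z.isLeft := by
              cases hbz : z.isLeft
              · exact ⟨u, hTsing u huS husing, huT, husing, by rw [hulft]; simp⟩
              · exact ⟨r, hTsing r hrS hrsing, hrT, hrsing, by rw [hrlft]; simp⟩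
            obtain ⟨t, htD, htT, htsing, htside⟩ := hattach
            obtain ⟨z', hz', hadj⟩ := exists_adj_bag_sing hc htsing z (Ne.symm htside)
            obtain ⟨htT', huT', hrt⟩ := htD
            intro y hy
            exact ⟨hbagT hy, huT,
              ((reach_in_connected (hZconn z hv₀ns) hbagT hy hz').trans
                ((reach_of_adj (S := Sᶜ) (hbagT hz') htT hadj).trans hrt))⟩
          refine hfull fun v hv => ?_
          by_cases hvNS : v ∈ NS
          · exact hbagD (hNSbag ▸ hvNS)
          · exact hTdiff ⟨hv, hvNS⟩
        · have hkprop : Sᶜ ∩ NS ⊂ NS := by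
            refine ⟨Set.inter_subset_right, fun hsub2 => ?_⟩
            exact hNSsub fun v hv => (hsub2 hv).1
          have h10 : setWeight w (Sᶜ ∩ NS) < setWeight w NS := setWeight_lt hwpos hkprop
          have h11 : setWeight w NS = 1 := by
            rw [hNSbag, weight_preimage hs, Set.ncard_singleton]
            norm_num
          have h12 : setWeight w (Sᶜ \ NS) ≤ setWeight w D := setWeight_mono hwnn hTdiff
          have h13 : setWeight w (Sᶜ \ NS) = setWeight w Sᶜ - setWeight w (Sᶜ ∩ NS) := by
            rw [show Sᶜ \ NS = Sᶜ \ (Sᶜ ∩ NS) by ext v; simp only [Set.mem_diff, Set.mem_inter_iff, Set.mem_compl_iff]; tauto,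
              setWeight_diff Set.inter_subset_left]
          linarith
    · refine case2 hG hmn hm hn hc hZ hZconn hS false ?_ hlt
      intro v hv hvsing hvb
      exact hR ⟨v, hv, hvsing, hvb⟩
  · refine case2 hG hmn hm hn hc hZ hZconn hS true ?_ hlt
    intro v hv hvsing hvb
    exact hL ⟨v, hv, hvsing, hvb⟩

end Big

theorem stmt_10 (G : SimpleGraph V) (hG : G.Connected) (m n : ℕ)
    (hmn : m ≠ n) (hm : 2 ≤ m) (hn : 2 ≤ n)
    (φ : V → Fin m ⊕ Fin n)
    (hφ : ContractibleTo G (completeBipartiteGraph (Fin m) (Fin n)) φ)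
    (hZ : ∀ h h' : Fin m ⊕ Fin n, 2 ≤ (φ ⁻¹' {h}).ncard → 2 ≤ (φ ⁻¹' {h'}).ncard → h = h')
    (hZconn : ∀ h : Fin m ⊕ Fin n, 2 ≤ (φ ⁻¹' {h}).ncard → (G.induce (φ ⁻¹' {h})).Connected) :
    ¬ InGcs G := by
  intro hIn
  have hs := hφ.1
  have hwpos : ∀ v, 0 < ww φ v := ww_pos hs
  have hEq := hIn (ww φ) hwpos
  set b : Bool := decide (m ≤ n) with hb
  have hS₀safe : IsSafeSet G (ww φ) (φ ⁻¹' (sideSet m n b)) :=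
    safe_side (by omega) (by omega) hφ hZconn b
  have hbt : (bif b then m else n) = min m n := by
    rcases le_or_gt m n with h | h
    · have hbtr : b = true := by rw [hb]; simp [h]
      rw [hbtr, min_eq_left h]; rfl
    · have hbtr : b = false := by rw [hb]; simp; omega
      rw [hbtr, min_eq_right h.le]; rfl
  have hS₀w : setWeight (ww φ) (φ ⁻¹' (sideSet m n b)) = ((m : ℝ) ⊓ (n : ℝ)) := by
    rw [weight_preimage hs, ncard_sideSet, hbt, Nat.cast_min]
  have hAfin : (setWeight (ww φ) '' {S | IsSafeSet G (ww φ) S}).Finite :=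
    Set.Finite.image _ (Set.toFinite _)
  have hAmem : ((m : ℝ) ⊓ (n : ℝ)) ∈ setWeight (ww φ) '' {S | IsSafeSet G (ww φ) S} :=
    ⟨_, hS₀safe, hS₀w⟩
  have hsafe_le : safeNumber G (ww φ) ≤ ((m : ℝ) ⊓ (n : ℝ)) :=
    csInf_le hAfin.bddBelow hAmem
  have hsafe_pos : 0 < safeNumber G (ww φ) := by
    obtain ⟨S', hS', hSw⟩ := Set.Nonempty.csInf_mem ⟨_, hAmem⟩ hAfin
    rw [safeNumber, ← hSw]
    exact setWeight_pos hwpos hS'.1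
  rcases eq_or_ne (setWeight (ww φ) '' {S | IsConnSafeSet G (ww φ) S}) ∅ with hEe | hEne
  · have h0 : connSafeNumber G (ww φ) = 0 := by
      rw [connSafeNumber, hEe, Real.sInf_empty]
    rw [hEq, h0] at hsafe_pos
    exact lt_irrefl 0 hsafe_pos
  · have hEfin : (setWeight (ww φ) '' {S | IsConnSafeSet G (ww φ) S}).Finite :=
      Set.Finite.image _ (Set.toFinite _)
    obtain ⟨S', hS', hSw⟩ :=
      Set.Nonempty.csInf_mem (Set.nonempty_iff_ne_empty.2 hEne) hEfin
    have hbig := connSafe_big hG hmn hm hn hφ hZ hZconn hS'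
    have hcs : connSafeNumber G (ww φ) = setWeight (ww φ) S' := by
      rw [connSafeNumber, hSw]
    rw [hEq, hcs] at hsafe_le
    have : ((m : ℝ) ⊓ (n : ℝ)) < setWeight (ww φ) S' := hbig
    linarith
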